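/- arXiv:1508.04568 — 2 statements merged into one kernel-verified Lean document; each statement's English description precedes it below -/
import Mathlib

section
/- (Witt–Artin decomposition) Let (V,ω) be a symplectic vector space, W ⊆ V any subspace, and let E be a complement of W ∩ W^ω in W and F a complement of W ∩ W^ω in W^ω. Then E and F are symplectic subspaces, E and F are ω-orthogonal to each other, V decomposes as the ω-orthogonal direct sum V = E ⊕ F ⊕ (E ⊕ F)^ω, and W ∩ W^ω is a lagrangian subspace of the symplectic subspace (E ⊕ F)^ω (with the restricted form). -/
/-!
Everything follows from the calculus of ω-orthogonals: `(A ⊔ B)^ω = A^ω ⊓ B^ω`, and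
`X^ωω = X` by nondegeneracy. A complement of the radical `X ∩ X^ω` in `X` is symplectic;
this applies to `E` (with `X = W`) and to `F` (with `X = W^ω`, which has the same radical).
`E ⊕ F` is then an orthogonal sum of symplectic subspaces, hence symplectic and complemented
by its orthogonal. Finally `E + F + (W ∩ W^ω) = W + W^ω`, so the orthogonal of `W ∩ W^ω`
inside `(E ⊕ F)^ω` is `(W + W^ω)^ω = W^ω ∩ W`.
-/

open Submodule Module

/-- The ω-orthogonal of a subspace: `W^ω = {v | ω(v,u) = 0 for all u ∈ W}`. -/
def oOrtho {V : Type*} [AddCommGroup V] [Module ℝ V]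
    (ω : V →ₗ[ℝ] V →ₗ[ℝ] ℝ) (W : Submodule ℝ V) : Submodule ℝ V where
  carrier := {v | ∀ u ∈ W, ω v u = 0}
  add_mem' := by
    intro a b ha hb u hu
    rw [Set.mem_setOf_eq] at *
    rw [map_add, LinearMap.add_apply, ha u hu, hb u hu, add_zero]
  zero_mem' := by intro u _; simp
  smul_mem' := by
    intro c a ha u hu
    rw [Set.mem_setOf_eq] at *
    rw [map_smul, LinearMap.smul_apply, ha u hu, smul_zero]

section OrthogonalCalculus

variable {V : Type*} [AddCommGroup V] [Module ℝ V] {ω : V →ₗ[ℝ] V →ₗ[ℝ] ℝ}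

theorem oOrtho_anti {A B : Submodule ℝ V} (h : A ≤ B) : oOrtho ω B ≤ oOrtho ω A :=
  fun _ hv u hu => hv u (h hu)

theorem oOrtho_sup (A B : Submodule ℝ V) : oOrtho ω (A ⊔ B) = oOrtho ω A ⊓ oOrtho ω B := by
  refine le_antisymm (le_inf (oOrtho_anti le_sup_left) (oOrtho_anti le_sup_right)) ?_
  rintro v ⟨hvA, hvB⟩ u hu
  obtain ⟨a, ha, b, hb, rfl⟩ := mem_sup.1 hu
  rw [map_add, hvA a ha, hvB b hb, add_zero]

theorem le_oOrtho_comm (hω : ω.IsRefl) {A B : Submodule ℝ V} :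
    A ≤ oOrtho ω B ↔ B ≤ oOrtho ω A :=
  ⟨fun h _ hb _ ha => hω _ _ (h ha _ hb), fun h _ ha _ hb => hω _ _ (h hb _ ha)⟩

theorem oOrtho_eq_orthogonal (hω : ω.IsRefl) (U : Submodule ℝ V) :
    oOrtho ω U = LinearMap.BilinForm.orthogonal ω U := by
  ext v
  exact ⟨fun h u hu => hω _ _ (h u hu), fun h u hu => hω _ _ (h u hu)⟩

theorem oOrtho_oOrtho [FiniteDimensional ℝ V] (hω : ω.IsRefl) (hnd : ω.Nondegenerate)
    (U : Submodule ℝ V) : oOrtho ω (oOrtho ω U) = U := by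
  rw [oOrtho_eq_orthogonal hω, oOrtho_eq_orthogonal hω]
  exact LinearMap.BilinForm.orthogonal_orthogonal hnd hω U

theorem sup_oOrtho_eq_top [FiniteDimensional ℝ V] (hω : ω.IsRefl) {U : Submodule ℝ V}
    (hU : U ⊓ oOrtho ω U = ⊥) : U ⊔ oOrtho ω U = ⊤ := by
  rw [oOrtho_eq_orthogonal hω] at hU ⊢
  exact ((LinearMap.BilinForm.isCompl_orthogonal_iff_disjoint hω).2
    (disjoint_iff.2 hU)).sup_eq_top

theorem inf_oOrtho_eq_bot_of_isCompl_radical (hω : ω.IsRefl) {X A : Submodule ℝ V}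
    (h₁ : A ⊓ (X ⊓ oOrtho ω X) = ⊥) (h₂ : A ⊔ (X ⊓ oOrtho ω X) = X) :
    A ⊓ oOrtho ω A = ⊥ := by
  set N := X ⊓ oOrtho ω X
  have hAX : A ≤ X := h₂ ▸ le_sup_left
  have hXN : X ≤ oOrtho ω N := (le_oOrtho_comm hω).1 inf_le_right
  have hA_orth : A ⊓ oOrtho ω A ≤ oOrtho ω X :=
    calc A ⊓ oOrtho ω A ≤ oOrtho ω A ⊓ oOrtho ω N :=
          le_inf inf_le_right (inf_le_left.trans (hAX.trans hXN))
      _ = oOrtho ω X := by rw [← oOrtho_sup, h₂]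
  exact le_bot_iff.1 <| h₁ ▸ le_inf inf_le_left (le_inf (inf_le_left.trans hAX) hA_orth)

theorem sup_inf_oOrtho_eq_bot (hω : ω.IsRefl) {A B : Submodule ℝ V}
    (hA : A ⊓ oOrtho ω A = ⊥) (hB : B ⊓ oOrtho ω B = ⊥) (hAB : A ≤ oOrtho ω B) :
    (A ⊔ B) ⊓ oOrtho ω (A ⊔ B) = ⊥ := by
  have hBA : B ≤ oOrtho ω A := (le_oOrtho_comm hω).1 hAB
  refine eq_bot_iff.2 fun x hx => ?_
  obtain ⟨hxAB, hxA, hxB⟩ : x ∈ A ⊔ B ∧ x ∈ oOrtho ω A ∧ x ∈ oOrtho ω B := by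
    rwa [oOrtho_sup, mem_inf, mem_inf] at hx
  obtain ⟨a, ha, b, hb, rfl⟩ := mem_sup.1 hxAB
  have ha' : a ∈ A ⊓ oOrtho ω A := ⟨ha, by simpa using sub_mem hxA (hBA hb)⟩
  have hb' : b ∈ B ⊓ oOrtho ω B := ⟨hb, by simpa using sub_mem hxB (hAB ha)⟩
  rw [hA, mem_bot] at ha'
  rw [hB, mem_bot] at hb'
  simp [ha', hb']

end OrthogonalCalculus

/-- Witt–Artin decomposition: if `E` is a complement of `W ∩ W^ω` in `W`
and `F` a complement of `W ∩ W^ω` in `W^ω`, then `E` and `F` are symplectic, ω-orthogonal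
to each other, `V = E ⊕ F ⊕ (E ⊕ F)^ω` is an ω-orthogonal direct sum, and `W ∩ W^ω` is a
lagrangian subspace of the symplectic subspace `(E ⊕ F)^ω`. -/
theorem stmt8
    {V : Type*} [AddCommGroup V] [Module ℝ V] [FiniteDimensional ℝ V]
    (ω : V →ₗ[ℝ] V →ₗ[ℝ] ℝ) (hωalt : ω.IsAlt) (hωnd : ω.Nondegenerate)
    (W E F : Submodule ℝ V)
    -- E is a complement of W ∩ W^ω in W
    (hE₁ : E ⊓ (W ⊓ oOrtho ω W) = ⊥) (hE₂ : E ⊔ (W ⊓ oOrtho ω W) = W)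
    -- F is a complement of W ∩ W^ω in W^ω
    (hF₁ : F ⊓ (W ⊓ oOrtho ω W) = ⊥) (hF₂ : F ⊔ (W ⊓ oOrtho ω W) = oOrtho ω W) :
    -- E and F are symplectic subspaces
    E ⊓ oOrtho ω E = ⊥ ∧ F ⊓ oOrtho ω F = ⊥ ∧
    -- E and F are ω-orthogonal to each other
    (∀ e ∈ E, ∀ f ∈ F, ω e f = 0) ∧
    -- V = E ⊕ F ⊕ (E ⊕ F)^ω is a direct sum decomposition (automatically ω-orthogonal)
    E ⊓ F = ⊥ ∧ (E ⊔ F) ⊓ oOrtho ω (E ⊔ F) = ⊥ ∧ E ⊔ F ⊔ oOrtho ω (E ⊔ F) = ⊤ ∧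
    -- W ∩ W^ω is a lagrangian subspace of the symplectic subspace (E ⊕ F)^ω:
    W ⊓ oOrtho ω W ≤ oOrtho ω (E ⊔ F) ∧
    W ⊓ oOrtho ω W = oOrtho ω (W ⊓ oOrtho ω W) ⊓ oOrtho ω (E ⊔ F) := by
  have hω : ω.IsRefl := hωalt.isRefl
  set N := W ⊓ oOrtho ω W
  have hEW : E ≤ W := hE₂ ▸ le_sup_left
  have hFW : F ≤ oOrtho ω W := hF₂ ▸ le_sup_left
  have hEF : E ≤ oOrtho ω F := (le_oOrtho_comm hω).2 (hFW.trans (oOrtho_anti hEW))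
  have hN : N = oOrtho ω W ⊓ oOrtho ω (oOrtho ω W) := by rw [oOrtho_oOrtho hω hωnd, inf_comm]
  have hEsymp : E ⊓ oOrtho ω E = ⊥ := inf_oOrtho_eq_bot_of_isCompl_radical hω hE₁ hE₂
  have hFsymp : F ⊓ oOrtho ω F = ⊥ := by
    rw [hN] at hF₁ hF₂
    exact inf_oOrtho_eq_bot_of_isCompl_radical hω hF₁ hF₂
  have hEFsymp := sup_inf_oOrtho_eq_bot hω hEsymp hFsymp hEF
  have hsum : E ⊔ F ⊔ N = W ⊔ oOrtho ω W :=
    calc E ⊔ F ⊔ N = (E ⊔ N) ⊔ (F ⊔ N) := by rw [sup_sup_sup_comm, sup_idem]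
      _ = W ⊔ oOrtho ω W := by rw [hE₂, hF₂]
  have hlag : oOrtho ω N ⊓ oOrtho ω (E ⊔ F) = N := by
    rw [inf_comm, ← oOrtho_sup, hsum, oOrtho_sup, oOrtho_oOrtho hω hωnd, inf_comm]
  have hEFbot : E ⊓ F = ⊥ :=
    le_bot_iff.1 <| hE₁ ▸
      le_inf inf_le_left (le_inf (inf_le_left.trans hEW) (inf_le_right.trans hFW))
  exact ⟨hEsymp, hFsymp, fun e he f hf => hEF he f hf, hEFbot, hEFsymp,
    sup_oOrtho_eq_top hω hEFsymp, hlag ▸ inf_le_right, hlag.symm⟩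
end

section
/- (Benenti–Tulczyjew) Let (V,ω) be a symplectic vector space and L ⊆ V × V a linear canonical relation from V to itself, with domain A = {v : ∃ w, (v,w) ∈ L} and range B = {w : ∃ v, (v,w) ∈ L}. Then A and B are coisotropic subspaces of V, and the induced quotient relation [L] ⊆ (A/A^ω) × (B/B^ω), defined by ([a],[b]) ∈ [L] iff (a,b) ∈ L for a ∈ A, b ∈ B, is the graph of a linear symplectomorphism from the reduced symplectic space (A/A^ω,[ω]_A) to the reduced symplectic space (B/B^ω,[ω]_B). -/
open Submodule Module

/-- The symplectic form `ω̄((v,v'),(u,u')) = ω(v,u) − ω(v',u')` on `V × V`. -/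
def prodForm {X Y : Type*} [AddCommGroup X] [Module ℝ X] [AddCommGroup Y] [Module ℝ Y]
    (ωX : X →ₗ[ℝ] X →ₗ[ℝ] ℝ) (ωY : Y →ₗ[ℝ] Y →ₗ[ℝ] ℝ) :
    (X × Y) →ₗ[ℝ] (X × Y) →ₗ[ℝ] ℝ :=
  LinearMap.mk₂ ℝ (fun p q => ωX p.1 q.1 - ωY p.2 q.2)
    (by intro m₁ m₂ n; simp [map_add, LinearMap.add_apply]; ring)
    (by intro c m n; simp [map_smul, LinearMap.smul_apply, smul_eq_mul]; ring)
    (by intro m n₁ n₂; simp [map_add, LinearMap.add_apply]; ring)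
    (by intro c m n; simp [map_smul, LinearMap.smul_apply, smul_eq_mul]; ring)

/-- The reduced space `W/W^ω` of a subspace `W` (quotient of `W` by `W ∩ W^ω ⊆ W`). -/
abbrev reduced {V : Type*} [AddCommGroup V] [Module ℝ V]
    (ω : V →ₗ[ℝ] V →ₗ[ℝ] ℝ) (W : Submodule ℝ V) :=
  W ⧸ (oOrtho ω W).comap W.subtype

/-!
For a lagrangian `L`, `A^ω = {v | (v, 0) ∈ L}` and `B^ω = {w | (0, w) ∈ L}`, which gives
coisotropy at once. The projections `L → A/A^ω` and `L → B/B^ω` are surjective, and their kernels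
`{p ∈ L | (p.1, 0) ∈ L}` and `{p ∈ L | (0, p.2) ∈ L}` coincide because `(p.1, 0) + (0, p.2) = p`.
Both reduced spaces are therefore the same quotient of `L`, and the induced isomorphism has graph
`[L]`. It is symplectic since `ω p.1 q.1 = ω p.2 q.2` for `p q ∈ L`.
-/

section LinearCanonicalRelation

variable {X Y : Type*} [AddCommGroup X] [Module ℝ X] [AddCommGroup Y] [Module ℝ Y]

theorem mem_oOrtho {ω : X →ₗ[ℝ] X →ₗ[ℝ] ℝ} {W : Submodule ℝ X} {v : X} :
    v ∈ oOrtho ω W ↔ ∀ u ∈ W, ω v u = 0 :=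
  Iff.rfl

theorem prodForm_apply (ωX : X →ₗ[ℝ] X →ₗ[ℝ] ℝ) (ωY : Y →ₗ[ℝ] Y →ₗ[ℝ] ℝ) (p q : X × Y) :
    prodForm ωX ωY p q = ωX p.1 q.1 - ωY p.2 q.2 :=
  rfl

variable {ωX : X →ₗ[ℝ] X →ₗ[ℝ] ℝ} {ωY : Y →ₗ[ℝ] Y →ₗ[ℝ] ℝ} {L : Submodule ℝ (X × Y)}

theorem mem_iff_of_eq_oOrtho_prodForm (hL : L = oOrtho (prodForm ωX ωY) L) {p : X × Y} :
    p ∈ L ↔ ∀ q ∈ L, ωX p.1 q.1 = ωY p.2 q.2 := by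
  conv_lhs => rw [hL]
  simp only [mem_oOrtho, prodForm_apply, sub_eq_zero]

theorem mem_oOrtho_map_fst_iff (hL : L = oOrtho (prodForm ωX ωY) L) (v : X) :
    v ∈ oOrtho ωX (L.map (LinearMap.fst ℝ X Y)) ↔ (v, 0) ∈ L := by
  rw [mem_iff_of_eq_oOrtho_prodForm hL]
  simp [mem_oOrtho]

theorem mem_oOrtho_map_snd_iff (hL : L = oOrtho (prodForm ωX ωY) L) (w : Y) :
    w ∈ oOrtho ωY (L.map (LinearMap.snd ℝ X Y)) ↔ (0, w) ∈ L := by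
  rw [mem_iff_of_eq_oOrtho_prodForm hL]
  simp [mem_oOrtho, eq_comm, forall_comm (α := Y)]

variable (ωX ωY L)

def reducedFst : L →ₗ[ℝ] reduced ωX (L.map (LinearMap.fst ℝ X Y)) :=
  Submodule.mkQ _ ∘ₗ (LinearMap.fst ℝ X Y).submoduleMap L

def reducedSnd : L →ₗ[ℝ] reduced ωY (L.map (LinearMap.snd ℝ X Y)) :=
  Submodule.mkQ _ ∘ₗ (LinearMap.snd ℝ X Y).submoduleMap L

theorem reducedFst_surjective : Function.Surjective (reducedFst ωX L) :=
  (Submodule.mkQ_surjective _).comp (LinearMap.submoduleMap_surjective _ _)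

theorem reducedSnd_surjective : Function.Surjective (reducedSnd ωY L) :=
  (Submodule.mkQ_surjective _).comp (LinearMap.submoduleMap_surjective _ _)

theorem reducedFst_apply (p : L) :
    reducedFst ωX L p = Submodule.Quotient.mk ⟨(p : X × Y).1, Submodule.mem_map_of_mem p.2⟩ :=
  rfl

theorem reducedSnd_apply (p : L) :
    reducedSnd ωY L p = Submodule.Quotient.mk ⟨(p : X × Y).2, Submodule.mem_map_of_mem p.2⟩ :=
  rfl

theorem exists_mk_eq_mk_eq_mem_iff (x : reduced ωX (L.map (LinearMap.fst ℝ X Y)))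
    (y : reduced ωY (L.map (LinearMap.snd ℝ X Y))) :
    (∃ (a : L.map (LinearMap.fst ℝ X Y)) (b : L.map (LinearMap.snd ℝ X Y)),
        Submodule.Quotient.mk a = x ∧ Submodule.Quotient.mk b = y ∧ ((a : X), (b : Y)) ∈ L) ↔
      ∃ p : L, reducedFst ωX L p = x ∧ reducedSnd ωY L p = y := by
  constructor
  · rintro ⟨a, b, rfl, rfl, hab⟩
    exact ⟨⟨_, hab⟩, rfl, rfl⟩
  · rintro ⟨p, rfl, rfl⟩
    exact ⟨_, _, rfl, rfl, p.2⟩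

variable {ωX ωY L}

theorem oOrtho_map_fst_le (hL : L = oOrtho (prodForm ωX ωY) L) :
    oOrtho ωX (L.map (LinearMap.fst ℝ X Y)) ≤ L.map (LinearMap.fst ℝ X Y) :=
  fun v hv ↦ ⟨(v, 0), (mem_oOrtho_map_fst_iff hL v).1 hv, rfl⟩

theorem oOrtho_map_snd_le (hL : L = oOrtho (prodForm ωX ωY) L) :
    oOrtho ωY (L.map (LinearMap.snd ℝ X Y)) ≤ L.map (LinearMap.snd ℝ X Y) :=
  fun w hw ↦ ⟨(0, w), (mem_oOrtho_map_snd_iff hL w).1 hw, rfl⟩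

theorem mem_ker_reducedFst_iff (hL : L = oOrtho (prodForm ωX ωY) L) (p : L) :
    p ∈ LinearMap.ker (reducedFst ωX L) ↔ ((p : X × Y).1, 0) ∈ L := by
  rw [LinearMap.mem_ker, reducedFst, LinearMap.comp_apply, Submodule.mkQ_apply,
    Submodule.Quotient.mk_eq_zero, Submodule.mem_comap, ← mem_oOrtho_map_fst_iff hL]
  rfl

theorem mem_ker_reducedSnd_iff (hL : L = oOrtho (prodForm ωX ωY) L) (p : L) :
    p ∈ LinearMap.ker (reducedSnd ωY L) ↔ (0, (p : X × Y).2) ∈ L := by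
  rw [LinearMap.mem_ker, reducedSnd, LinearMap.comp_apply, Submodule.mkQ_apply,
    Submodule.Quotient.mk_eq_zero, Submodule.mem_comap, ← mem_oOrtho_map_snd_iff hL]
  rfl

theorem ker_reducedFst_eq_ker_reducedSnd (hL : L = oOrtho (prodForm ωX ωY) L) :
    LinearMap.ker (reducedFst ωX L) = LinearMap.ker (reducedSnd ωY L) := by
  ext p
  rw [mem_ker_reducedFst_iff hL, mem_ker_reducedSnd_iff hL]
  have hsplit : ((p : X × Y).1, (0 : Y)) + (0, (p : X × Y).2) ∈ L := by simp
  exact ⟨fun h ↦ (L.add_mem_iff_right h).1 hsplit, fun h ↦ (L.add_mem_iff_left h).1 hsplit⟩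

noncomputable def reducedEquiv (hL : L = oOrtho (prodForm ωX ωY) L) :
    reduced ωX (L.map (LinearMap.fst ℝ X Y)) ≃ₗ[ℝ] reduced ωY (L.map (LinearMap.snd ℝ X Y)) :=
  ((reducedFst ωX L).quotKerEquivOfSurjective (reducedFst_surjective ωX L)).symm ≪≫ₗ
    Submodule.quotEquivOfEq _ _ (ker_reducedFst_eq_ker_reducedSnd hL) ≪≫ₗ
    (reducedSnd ωY L).quotKerEquivOfSurjective (reducedSnd_surjective ωY L)

theorem reducedEquiv_reducedFst (hL : L = oOrtho (prodForm ωX ωY) L) (p : L) :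
    reducedEquiv hL (reducedFst ωX L p) = reducedSnd ωY L p := by
  simp [reducedEquiv]

theorem reducedEquiv_eq_iff (hL : L = oOrtho (prodForm ωX ωY) L) {x y} :
    reducedEquiv hL x = y ↔ ∃ p : L, reducedFst ωX L p = x ∧ reducedSnd ωY L p = y := by
  constructor
  · rintro rfl
    obtain ⟨p, rfl⟩ := reducedFst_surjective ωX L x
    exact ⟨p, rfl, (reducedEquiv_reducedFst hL p).symm⟩
  · rintro ⟨p, rfl, rfl⟩
    exact reducedEquiv_reducedFst hL p

theorem reducedEquiv_preserves_form (hL : L = oOrtho (prodForm ωX ωY) L)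
    (ΩA : reduced ωX (L.map (LinearMap.fst ℝ X Y)) →ₗ[ℝ]
      reduced ωX (L.map (LinearMap.fst ℝ X Y)) →ₗ[ℝ] ℝ)
    (hΩA : ∀ u v : L.map (LinearMap.fst ℝ X Y),
      ΩA (Submodule.Quotient.mk u) (Submodule.Quotient.mk v) = ωX u v)
    (ΩB : reduced ωY (L.map (LinearMap.snd ℝ X Y)) →ₗ[ℝ]
      reduced ωY (L.map (LinearMap.snd ℝ X Y)) →ₗ[ℝ] ℝ)
    (hΩB : ∀ u v : L.map (LinearMap.snd ℝ X Y),
      ΩB (Submodule.Quotient.mk u) (Submodule.Quotient.mk v) = ωY u v)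
    (x y : reduced ωX (L.map (LinearMap.fst ℝ X Y))) :
    ΩB (reducedEquiv hL x) (reducedEquiv hL y) = ΩA x y := by
  obtain ⟨p, rfl⟩ := reducedFst_surjective ωX L x
  obtain ⟨q, rfl⟩ := reducedFst_surjective ωX L y
  rw [reducedEquiv_reducedFst, reducedEquiv_reducedFst, reducedSnd_apply, reducedSnd_apply,
    reducedFst_apply, reducedFst_apply, hΩA, hΩB]
  exact ((mem_iff_of_eq_oOrtho_prodForm hL).1 p.2 q q.2).symm

end LinearCanonicalRelation

theorem stmt12_general
    {V : Type*} [AddCommGroup V] [Module ℝ V]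
    (ω : V →ₗ[ℝ] V →ₗ[ℝ] ℝ)
    (L : Submodule ℝ (V × V)) (hL : L = oOrtho (prodForm ω ω) L)
    -- the reduced symplectic forms on A/A^ω and B/B^ω
    (ΩA : reduced ω (Submodule.map (LinearMap.fst ℝ V V) L) →ₗ[ℝ]
          reduced ω (Submodule.map (LinearMap.fst ℝ V V) L) →ₗ[ℝ] ℝ)
    (hΩA : ∀ u v : Submodule.map (LinearMap.fst ℝ V V) L,
      ΩA (Submodule.Quotient.mk u) (Submodule.Quotient.mk v) = ω (u : V) (v : V))
    (ΩB : reduced ω (Submodule.map (LinearMap.snd ℝ V V) L) →ₗ[ℝ]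
          reduced ω (Submodule.map (LinearMap.snd ℝ V V) L) →ₗ[ℝ] ℝ)
    (hΩB : ∀ u v : Submodule.map (LinearMap.snd ℝ V V) L,
      ΩB (Submodule.Quotient.mk u) (Submodule.Quotient.mk v) = ω (u : V) (v : V)) :
    -- A and B are coisotropic
    oOrtho ω (Submodule.map (LinearMap.fst ℝ V V) L) ≤ Submodule.map (LinearMap.fst ℝ V V) L ∧
    oOrtho ω (Submodule.map (LinearMap.snd ℝ V V) L) ≤ Submodule.map (LinearMap.snd ℝ V V) L ∧
    -- the induced quotient relation is the graph of a linear symplectomorphism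
    ∃ φ : reduced ω (Submodule.map (LinearMap.fst ℝ V V) L) ≃ₗ[ℝ]
          reduced ω (Submodule.map (LinearMap.snd ℝ V V) L),
      (∀ x y, ΩB (φ x) (φ y) = ΩA x y) ∧
      (∀ (x : reduced ω (Submodule.map (LinearMap.fst ℝ V V) L))
         (y : reduced ω (Submodule.map (LinearMap.snd ℝ V V) L)),
        (∃ (a : Submodule.map (LinearMap.fst ℝ V V) L)
           (b : Submodule.map (LinearMap.snd ℝ V V) L),
          Submodule.Quotient.mk a = x ∧ Submodule.Quotient.mk b = y ∧ ((a : V), (b : V)) ∈ L)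
          ↔ φ x = y) :=
  ⟨oOrtho_map_fst_le hL, oOrtho_map_snd_le hL, reducedEquiv hL,
    reducedEquiv_preserves_form hL ΩA hΩA ΩB hΩB,
    fun x y ↦ (exists_mk_eq_mk_eq_mem_iff ω ω L x y).trans (reducedEquiv_eq_iff hL).symm⟩

/-- Benenti–Tulczyjew: the domain `A` and range `B` of a linear canonical
relation `L ⊆ V × V` are coisotropic, and the induced quotient relation
`[L] ⊆ (A/A^ω) × (B/B^ω)` is the graph of a linear symplectomorphism between the
reduced symplectic spaces. -/
theorem stmt12
    {V : Type*} [AddCommGroup V] [Module ℝ V] [FiniteDimensional ℝ V]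
    (ω : V →ₗ[ℝ] V →ₗ[ℝ] ℝ) (hωalt : ω.IsAlt) (hωnd : ω.Nondegenerate)
    (L : Submodule ℝ (V × V)) (hL : L = oOrtho (prodForm ω ω) L)
    -- the reduced symplectic forms on A/A^ω and B/B^ω
    (ΩA : reduced ω (Submodule.map (LinearMap.fst ℝ V V) L) →ₗ[ℝ]
          reduced ω (Submodule.map (LinearMap.fst ℝ V V) L) →ₗ[ℝ] ℝ)
    (hΩA : ∀ u v : Submodule.map (LinearMap.fst ℝ V V) L,
      ΩA (Submodule.Quotient.mk u) (Submodule.Quotient.mk v) = ω (u : V) (v : V))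
    (ΩB : reduced ω (Submodule.map (LinearMap.snd ℝ V V) L) →ₗ[ℝ]
          reduced ω (Submodule.map (LinearMap.snd ℝ V V) L) →ₗ[ℝ] ℝ)
    (hΩB : ∀ u v : Submodule.map (LinearMap.snd ℝ V V) L,
      ΩB (Submodule.Quotient.mk u) (Submodule.Quotient.mk v) = ω (u : V) (v : V)) :
    -- A and B are coisotropic
    oOrtho ω (Submodule.map (LinearMap.fst ℝ V V) L) ≤ Submodule.map (LinearMap.fst ℝ V V) L ∧
    oOrtho ω (Submodule.map (LinearMap.snd ℝ V V) L) ≤ Submodule.map (LinearMap.snd ℝ V V) L ∧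
    -- the induced quotient relation is the graph of a linear symplectomorphism
    ∃ φ : reduced ω (Submodule.map (LinearMap.fst ℝ V V) L) ≃ₗ[ℝ]
          reduced ω (Submodule.map (LinearMap.snd ℝ V V) L),
      (∀ x y, ΩB (φ x) (φ y) = ΩA x y) ∧
      (∀ (x : reduced ω (Submodule.map (LinearMap.fst ℝ V V) L))
         (y : reduced ω (Submodule.map (LinearMap.snd ℝ V V) L)),
        (∃ (a : Submodule.map (LinearMap.fst ℝ V V) L)
           (b : Submodule.map (LinearMap.snd ℝ V V) L),
          Submodule.Quotient.mk a = x ∧ Submodule.Quotient.mk b = y ∧ ((a : V), (b : V)) ∈ L)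
          ↔ φ x = y) :=
  stmt12_general ω L hL ΩA hΩA ΩB hΩB
end
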